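/- Let β ∈ B_n and let β = Δ_n^{−t} β' be the unique decomposition with t a nonnegative integer and β' ∈ B⁺_n not left divisible by Δ_n unless t = 0. Then t · n(n−1)/2 + ℓ(β') ≤ (n² − n − 1) · ‖β‖_Σ, where ℓ(β') is the common length of all positive words over σ_1,…,σ_{n−1} representing β' (all such words have the same length, since the braid relations are homogeneous). -/

import Mathlib

/-!
Take a shortest word for `β`, with `p` letters `σ_i` and `k` letters `σ_i⁻¹`. Every `σ_i`
left-divides `Δ_n`, so `σ_i⁻¹ = r Δ_n⁻¹` with `r` positive, and conjugation by `Δ_n` maps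
`σ_i` to `σ_{n-i}`; pushing all the `Δ_n⁻¹` to the left gives `β = Δ_n^{-k} x` with `x`
positive. If `t > k`, then `β' = Δ_n^{t-k} x` would be left-divisible by `Δ_n`, so `t ≤ k`.
The exponent sum is a homomorphism `B_n → ℤ` that equals the length on positive braids and
is `n(n-1)/2` on `Δ_n`, whence `ℓ(β') = p - k + t n(n-1)/2`, and
`t n(n-1)/2 + ℓ(β') ≤ k (n² - n) + p - k ≤ (n² - n - 1)(p + k)`.
-/

namespace Braid

/-- Defining relations of the braid group, with generators indexed by `Fin m`
(the index `i : Fin m` stands for the Artin generator `σ_{i+1}`). -/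
def braidRels (m : ℕ) : Set (FreeGroup (Fin m)) :=
  {r | ∃ i j : Fin m,
      ((i : ℕ) + 2 ≤ (j : ℕ) ∧
        r = FreeGroup.of i * FreeGroup.of j * (FreeGroup.of i)⁻¹ * (FreeGroup.of j)⁻¹) ∨
      ((j : ℕ) = (i : ℕ) + 1 ∧
        r = FreeGroup.of i * FreeGroup.of j * FreeGroup.of i *
            (FreeGroup.of j)⁻¹ * (FreeGroup.of i)⁻¹ * (FreeGroup.of j)⁻¹)}

/-- The braid group `B_n` on `n` strands, presented by the Artin generators
`σ_1, …, σ_{n-1}` and the braid relations. -/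
abbrev B (n : ℕ) : Type := PresentedGroup (braidRels (n - 1))

/-- The Artin generator `σ_i` of `B n`, for `1 ≤ i ≤ n-1` (junk value `1` otherwise). -/
def gen (n i : ℕ) : B n :=
  if h : i - 1 < n - 1 then PresentedGroup.of (⟨i - 1, h⟩ : Fin (n - 1)) else 1

/-- The positive braid monoid `B⁺_k` inside `B n`: the submonoid generated by
`σ_1, …, σ_{k-1}`. -/
def Bplus (n k : ℕ) : Submonoid (B n) :=
  Submonoid.closure {x | ∃ i, 1 ≤ i ∧ i + 1 ≤ k ∧ x = gen n i}

/-- The subgroup `B_k` of `B n`, generated by `σ_1, …, σ_{k-1}`. -/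
def Bsub (n k : ℕ) : Subgroup (B n) :=
  Subgroup.closure {x | ∃ i, 1 ≤ i ∧ i + 1 ≤ k ∧ x = gen n i}

/-- `β` left-divides `γ` (with respect to the positive monoid `B⁺_n`). -/
def LDiv (n : ℕ) (β γ : B n) : Prop := β⁻¹ * γ ∈ Bplus n n

/-- `β` right-divides `γ` (with respect to the positive monoid `B⁺_n`). -/
def RDiv (n : ℕ) (β γ : B n) : Prop := γ * β⁻¹ ∈ Bplus n n

/-- The Garside element `Δ_k = (σ_1⋯σ_{k-1})(σ_1⋯σ_{k-2})⋯(σ_1σ_2)σ_1` of `B⁺_k`,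
viewed inside `B n`. -/
def delta (n k : ℕ) : B n :=
  ((List.range (k - 1)).reverse.map
    (fun j => ((List.range' 1 (j + 1)).map (gen n)).prod)).prod

/-- The `k`-th power of the flip automorphism `φ_n` of `B n`:
conjugation by `Δ_n^k`. -/
def flip (n k : ℕ) (x : B n) : B n := delta n n ^ k * x * (delta n n ^ k)⁻¹

/-- The set `φ_n^k(B⁺_{n-1})` inside `B n`. -/
def flipSet (n k : ℕ) : Set (B n) := flip n k '' (Bplus n (n - 1) : Set (B n))

/-- `δ` is the maximal right divisor of `β` lying in the set `X`:
`δ ∈ X`, `δ` right-divides `β`, and every right divisor of `β` lying in `X`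
right-divides `δ`. -/
def IsMaxRDivIn (n : ℕ) (X : Set (B n)) (β δ : B n) : Prop :=
  δ ∈ X ∧ RDiv n δ β ∧ ∀ γ ∈ X, RDiv n γ β → RDiv n γ δ

/-- The product `φ_n^{d-1}(b d) ⋯ φ_n^{k-1}(b k)` (factors in decreasing order of
the index, from `d` down to `k`). -/
def tailProd (n : ℕ) (b : ℕ → B n) (k d : ℕ) : B n :=
  ((List.range' k (d + 1 - k)).reverse.map (fun l => flip n (l - 1) (b l))).prod

/-- `(b d, …, b 1)` is the `φ_n`-splitting of `β`: each `b k` lies in `B⁺_{n-1}`,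
`b d ≠ 1`, `β = φ_n^{d-1}(b d) ⋯ φ_n(b 2) (b 1)`, and for each `k`, the element
`φ_n^{k-1}(b k)` is the maximal right divisor of `φ_n^{d-1}(b d) ⋯ φ_n^{k-1}(b k)`
lying in `φ_n^{k-1}(B⁺_{n-1})`. -/
def IsSplitting (n d : ℕ) (b : ℕ → B n) (β : B n) : Prop :=
  1 ≤ d ∧ (∀ k, 1 ≤ k → k ≤ d → b k ∈ Bplus n (n - 1)) ∧ b d ≠ 1 ∧
  β = tailProd n b 1 d ∧
  ∀ k, 1 ≤ k → k ≤ d →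
    IsMaxRDivIn n (flipSet n (k - 1)) (tailProd n b k d) (flip n (k - 1) (b k))

/-- Evaluation of a word over the letters `σ_i^{±1}` in `B n`: the letter `(i, true)`
stands for `σ_i` and `(i, false)` for `σ_i⁻¹`. -/
def evalWord (n : ℕ) (w : List (ℕ × Bool)) : B n :=
  (w.map (fun p => if p.2 then gen n p.1 else (gen n p.1)⁻¹)).prod

/-- A word over the letters `σ_j^{±1}` is `σ_i`-positive: it contains at least one
letter `σ_i`, no letter `σ_i⁻¹` and no letter `σ_j^{±1}` with `j > i`. -/
def SigmaPos (i : ℕ) (w : List (ℕ × Bool)) : Prop :=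
  (i, true) ∈ w ∧ (i, false) ∉ w ∧ ∀ p ∈ w, 1 ≤ p.1 ∧ p.1 ≤ i

/-- A word over the letters `σ_j^{±1}` is `σ_i`-negative: it contains at least one
letter `σ_i⁻¹`, no letter `σ_i` and no letter `σ_j^{±1}` with `j > i`. -/
def SigmaNeg (i : ℕ) (w : List (ℕ × Bool)) : Prop :=
  (i, false) ∈ w ∧ (i, true) ∉ w ∧ ∀ p ∈ w, 1 ≤ p.1 ∧ p.1 ≤ i

/-- The Dehornoy ordering on `B n`: `β < γ` iff `β⁻¹γ` is represented by a
`σ_i`-positive word for some `i ≤ n-1`. -/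
def dlt (n : ℕ) (β γ : B n) : Prop :=
  ∃ i w, i + 1 ≤ n ∧ SigmaPos i w ∧ evalWord n w = β⁻¹ * γ

/-- The nonstrict Dehornoy ordering. -/
def dle (n : ℕ) (β γ : B n) : Prop := dlt n β γ ∨ β = γ

/-- The minimal length of a word over `σ_1^{±1}, …, σ_{n-1}^{±1}` representing `β`. -/
noncomputable def normSigma (n : ℕ) (β : B n) : ℕ :=
  sInf {l | ∃ w : List (ℕ × Bool), (∀ p ∈ w, 1 ≤ p.1 ∧ p.1 ≤ n - 1) ∧
    evalWord n w = β ∧ w.length = l}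

/-- The (common) length of the positive words over `σ_1, …, σ_{n-1}` representing a
positive braid `β`. -/
noncomputable def posLen (n : ℕ) (β : B n) : ℕ :=
  sInf {l | ∃ w : List (ℕ × Bool), (∀ p ∈ w, 1 ≤ p.1 ∧ p.1 ≤ n - 1 ∧ p.2 = true) ∧
    evalWord n w = β ∧ w.length = l}

/-- The Birman–Ko–Lee generator `a_{p,q} = σ_p ⋯ σ_{q-2} σ_{q-1} σ_{q-2}⁻¹ ⋯ σ_p⁻¹`
of `B n`. -/
def bkl (n p q : ℕ) : B n :=
  ((List.range' p (q - 1 - p)).map (gen n)).prod * gen n (q - 1) *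
    (((List.range' p (q - 1 - p)).map (gen n)).prod)⁻¹

/-- The dual braid monoid `B⁺*_n`: the submonoid of `B n` generated by the
Birman–Ko–Lee generators. -/
def DualBplus (n : ℕ) : Submonoid (B n) :=
  Submonoid.closure {x | ∃ p q, 1 ≤ p ∧ p < q ∧ q ≤ n ∧ x = bkl n p q}

/-- Evaluation in `B n` of a word over the letters `a_{p,q}^{±1}`. -/
def evalDual (n : ℕ) (w : List ((ℕ × ℕ) × Bool)) : B n :=
  (w.map (fun l => if l.2 then bkl n l.1.1 l.1.2 else (bkl n l.1.1 l.1.2)⁻¹)).prod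

/-- The minimal length of a word over the letters `a_{p,q}^{±1}` (`1 ≤ p < q ≤ n`)
representing `β`. -/
noncomputable def normDual (n : ℕ) (β : B n) : ℕ :=
  sInf {l | ∃ w : List ((ℕ × ℕ) × Bool),
    (∀ p ∈ w, 1 ≤ p.1.1 ∧ p.1.1 < p.1.2 ∧ p.1.2 ≤ n) ∧ evalDual n w = β ∧ w.length = l}

lemma le_of_inv_pow_mul_eq_inv_pow_mul {G : Type*} [Group G] {M : Submonoid G} {d x y : G}
    {t k : ℕ} (hd : d ∈ M) (hx : x ∈ M) (hy : t ≠ 0 → d⁻¹ * y ∉ M)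
    (h : (d ^ t)⁻¹ * y = (d ^ k)⁻¹ * x) : t ≤ k := by
  by_contra! hkt
  obtain ⟨m, rfl⟩ : ∃ m, t = k + m + 1 := ⟨t - k - 1, by omega⟩
  have hdy : d⁻¹ * y = d ^ m * x := by
    rw [inv_mul_eq_iff_eq_mul.mp h]
    group
  exact hy (by omega) (hdy ▸ mul_mem (pow_mem hd m) hx)

variable {n : ℕ}

lemma gen_eq_mk {i : ℕ} (h : i - 1 < n - 1) :
    gen n i = PresentedGroup.mk _ (FreeGroup.of (⟨i - 1, h⟩ : Fin (n - 1))) :=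
  dif_pos h

lemma gen_mul_gen_comm {i j : ℕ} (hi : 1 ≤ i) (hij : i + 2 ≤ j) (hj : j ≤ n - 1) :
    gen n i * gen n j = gen n j * gen n i := by
  simp only [gen_eq_mk (by omega : i - 1 < n - 1), gen_eq_mk (by omega : j - 1 < n - 1),
    ← map_mul]
  exact PresentedGroup.mk_eq_mk_of_mul_inv_mem
    ⟨⟨i - 1, by omega⟩, ⟨j - 1, by omega⟩, Or.inl ⟨by simp only; omega, by simp [mul_assoc]⟩⟩

lemma gen_braid {i : ℕ} (hi : 1 ≤ i) (hin : i + 1 ≤ n - 1) :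
    gen n i * gen n (i + 1) * gen n i = gen n (i + 1) * gen n i * gen n (i + 1) := by
  simp only [gen_eq_mk (by omega : i - 1 < n - 1), gen_eq_mk (by omega : i + 1 - 1 < n - 1),
    ← map_mul]
  exact PresentedGroup.mk_eq_mk_of_mul_inv_mem
    ⟨⟨i - 1, by omega⟩, ⟨i + 1 - 1, by omega⟩, Or.inr ⟨by simp only; omega, by simp [mul_assoc]⟩⟩

def genProd (n : ℕ) (L : List ℕ) : B n := (L.map (gen n)).prod

@[simp] lemma genProd_nil : genProd n [] = 1 := rfl

@[simp] lemma genProd_cons (i : ℕ) (L : List ℕ) :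
    genProd n (i :: L) = gen n i * genProd n L := List.prod_cons

@[simp] lemma genProd_append (L L' : List ℕ) :
    genProd n (L ++ L') = genProd n L * genProd n L' := by
  simp [genProd]

def ascProd (n k : ℕ) : B n := genProd n (List.range' 1 k)

lemma ascProd_succ (k : ℕ) : ascProd n (k + 1) = ascProd n k * gen n (k + 1) := by
  simp [ascProd, List.range'_1_concat, Nat.add_comm]

lemma delta_succ (k : ℕ) : delta n (k + 1) = ascProd n k * delta n k := by
  cases k with
  | zero => simp [delta, ascProd]
  | succ k => simp [delta, ascProd, genProd, List.range_succ]

lemma ascProd_mul_gen {j k : ℕ} (hj : 1 ≤ j) (hjk : j < k) (hk : k ≤ n - 1) :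
    ascProd n k * gen n j = gen n (j + 1) * ascProd n k := by
  induction k with
  | zero => omega
  | succ k ih =>
    rcases Nat.lt_succ_iff_lt_or_eq.mp hjk with hjk' | rfl
    · rw [ascProd_succ, mul_assoc, ← gen_mul_gen_comm hj (by omega) hk, ← mul_assoc,
        ih hjk' (by omega), mul_assoc]
    · obtain ⟨m, rfl⟩ : ∃ m, j = m + 1 := ⟨j - 1, by omega⟩
      have hcomm : Commute (gen n (m + 2)) (ascProd n m) :=
        Commute.list_prod_right _ _ fun x hx => by
          obtain ⟨i, hi, rfl⟩ := List.mem_map.mp hx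
          rw [List.mem_range'_1] at hi
          exact (gen_mul_gen_comm (by omega) (by omega) (by omega)).symm
      calc ascProd n (m + 2) * gen n (m + 1)
          = ascProd n m * (gen n (m + 1) * gen n (m + 2) * gen n (m + 1)) := by
            simp only [ascProd_succ, mul_assoc]
        _ = ascProd n m * (gen n (m + 2) * gen n (m + 1) * gen n (m + 2)) := by
            rw [gen_braid (by omega) (by omega)]
        _ = gen n (m + 2) * ascProd n (m + 2) := by
            simp only [ascProd_succ, ← mul_assoc, hcomm.eq]

lemma ascProd_mul_genProd {k : ℕ} {L : List ℕ} (hL : ∀ j ∈ L, 1 ≤ j ∧ j < k) (hk : k ≤ n - 1) :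
    ascProd n k * genProd n L = genProd n (L.map (· + 1)) * ascProd n k := by
  induction L with
  | nil => simp
  | cons j L ih =>
    have hj := hL j (by simp)
    rw [genProd_cons, ← mul_assoc, ascProd_mul_gen hj.1 hj.2 hk, mul_assoc,
      ih fun i hi => hL i (by simp [hi])]
    simp [mul_assoc]

lemma gen_commute_delta {i k : ℕ} (hki : k < i) (hi : i ≤ n - 1) :
    Commute (gen n i) (delta n k) := by
  induction k with
  | zero => exact Commute.one_right _
  | succ k ih =>
    rw [delta_succ]
    refine Commute.mul_right (Commute.list_prod_right _ _ fun x hx => ?_) (ih (by omega))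
    obtain ⟨j, hj, rfl⟩ := List.mem_map.mp hx
    rw [List.mem_range'_1] at hj
    exact (gen_mul_gen_comm (by omega) (by omega) hi).symm

lemma delta_mul_gen {i k : ℕ} (hk : k ≤ n) (hi : 1 ≤ i) (hik : i < k) :
    delta n k * gen n i = gen n (k - i) * delta n k := by
  induction k with
  | zero => omega
  | succ k ih =>
    rcases Nat.lt_succ_iff_lt_or_eq.mp hik with hik' | rfl
    · rw [delta_succ, mul_assoc, ih (by omega) hik', ← mul_assoc,
        ascProd_mul_gen (by omega) (by omega) (by omega), mul_assoc, Nat.sub_add_comm hik'.le]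
    · obtain ⟨m, rfl⟩ : ∃ m, i = m + 1 := ⟨i - 1, by omega⟩
      have hshift : gen n 1 * (ascProd n (m + 1) * ascProd n m) =
          ascProd n (m + 1) * ascProd n (m + 1) := by
        have := ascProd_mul_genProd (n := n) (k := m + 1) (L := List.range' 1 m)
          (fun j hj => by rw [List.mem_range'_1] at hj; omega) (by omega)
        rw [show ascProd n m = genProd n (List.range' 1 m) from rfl, this,
          ← List.range'_succ_left, ← mul_assoc, ← genProd_cons, ← List.range'_succ]
        rfl
      calc delta n (m + 1 + 1) * gen n (m + 1)
          = ascProd n (m + 1) * (ascProd n m * gen n (m + 1)) * delta n m := by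
            rw [delta_succ, delta_succ, mul_assoc, mul_assoc, mul_assoc,
              ← (gen_commute_delta (by omega) (by omega)).eq]
            simp only [mul_assoc]
        _ = gen n 1 * (ascProd n (m + 1) * ascProd n m) * delta n m := by
            rw [← ascProd_succ, hshift]
        _ = gen n (m + 1 + 1 - (m + 1)) * delta n (m + 1 + 1) := by
            rw [delta_succ, delta_succ, Nat.add_sub_cancel_left]
            simp only [mul_assoc]

lemma gen_mem_Bplus {i : ℕ} (hi : 1 ≤ i) (hin : i ≤ n - 1) : gen n i ∈ Bplus n n :=
  Submonoid.subset_closure ⟨i, hi, by omega, rfl⟩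

lemma genProd_mem_Bplus {L : List ℕ} (hL : ∀ i ∈ L, 1 ≤ i ∧ i ≤ n - 1) :
    genProd n L ∈ Bplus n n :=
  Submonoid.list_prod_mem _ fun x hx => by
    obtain ⟨i, hi, rfl⟩ := List.mem_map.mp hx
    exact gen_mem_Bplus (hL i hi).1 (hL i hi).2

lemma ascProd_mem_Bplus {k : ℕ} (hk : k ≤ n - 1) : ascProd n k ∈ Bplus n n :=
  genProd_mem_Bplus fun i hi => by rw [List.mem_range'_1] at hi; omega

lemma delta_mem_Bplus {k : ℕ} (hk : k ≤ n) : delta n k ∈ Bplus n n := by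
  induction k with
  | zero => exact one_mem _
  | succ k ih => rw [delta_succ]; exact mul_mem (ascProd_mem_Bplus (by omega)) (ih (by omega))

lemma exists_gen_mul_eq_delta {i k : ℕ} (hk : k ≤ n) (hi : 1 ≤ i) (hik : i < k) :
    ∃ r ∈ Bplus n n, gen n i * r = delta n k := by
  induction k generalizing i with
  | zero => omega
  | succ k ih =>
    obtain rfl | hi' := hi.eq_or_lt
    · obtain ⟨m, rfl⟩ : ∃ m, k = m + 1 := ⟨k - 1, by omega⟩
      have hL : ∀ j ∈ List.range' 2 m, 1 ≤ j ∧ j ≤ n - 1 := fun j hj => by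
        rw [List.mem_range'_1] at hj; omega
      refine ⟨genProd n (List.range' 2 m) * delta n (m + 1),
        mul_mem (genProd_mem_Bplus hL) (delta_mem_Bplus (by omega)), ?_⟩
      rw [delta_succ (m + 1), ← mul_assoc, ← genProd_cons]
      rfl
    · obtain ⟨r, hr, hδ⟩ := ih (i := i - 1) (by omega) (by omega) (by omega)
      refine ⟨ascProd n k * r, mul_mem (ascProd_mem_Bplus (by omega)) hr, ?_⟩
      rw [delta_succ, ← hδ, ← mul_assoc, ← mul_assoc,
        ascProd_mul_gen (j := i - 1) (by omega) (by omega) (by omega), Nat.sub_add_cancel hi'.le]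

lemma delta_conj_gen {i : ℕ} (hi : 1 ≤ i) (hin : i ≤ n - 1) :
    delta n n * gen n i * (delta n n)⁻¹ = gen n (n - i) := by
  rw [delta_mul_gen le_rfl hi (by omega), mul_inv_cancel_right]

lemma delta_pow_conj_mem_Bplus (t : ℕ) {x : B n} (hx : x ∈ Bplus n n) :
    delta n n ^ t * x * (delta n n ^ t)⁻¹ ∈ Bplus n n := by
  have hconj : Bplus n n ≤ (Bplus n n).comap (MulAut.conj (delta n n)).toMonoidHom := by
    refine Submonoid.closure_le.mpr ?_
    rintro _ ⟨i, hi, hin, rfl⟩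
    rw [SetLike.mem_coe, Submonoid.mem_comap, MulEquiv.coe_toMonoidHom, MulAut.conj_apply,
      delta_conj_gen hi (by omega)]
    exact gen_mem_Bplus (by omega) (by omega)
  induction t with
  | zero => simpa using hx
  | succ t ih =>
    have h := hconj ih
    rw [Submonoid.mem_comap, MulEquiv.coe_toMonoidHom, MulAut.conj_apply] at h
    convert h using 1
    group

def expSumHom (n : ℕ) : B n →* Multiplicative ℤ :=
  PresentedGroup.toGroup (f := fun _ => Multiplicative.ofAdd 1) fun _ ⟨_, _, h⟩ => by
    rcases h with ⟨_, rfl⟩ | ⟨_, rfl⟩ <;> simp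

def expSum (x : B n) : ℤ := (expSumHom n x).toAdd

@[simp] lemma expSum_mul (x y : B n) : expSum (x * y) = expSum x + expSum y := by
  simp [expSum]

@[simp] lemma expSum_inv (x : B n) : expSum x⁻¹ = -expSum x := by
  simp [expSum]

@[simp] lemma expSum_pow (x : B n) (t : ℕ) : expSum (x ^ t) = t * expSum x := by
  simp [expSum]

lemma expSum_gen {i : ℕ} (hi : 1 ≤ i) (hin : i ≤ n - 1) : expSum (gen n i) = 1 := by
  rw [expSum, gen_eq_mk (by omega)]
  exact congrArg Multiplicative.toAdd (PresentedGroup.toGroup.of _)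

lemma expSum_ascProd {k : ℕ} (hk : k ≤ n - 1) : expSum (ascProd n k) = k := by
  induction k with
  | zero => simp [expSum, ascProd, genProd]
  | succ k ih =>
    rw [ascProd_succ, expSum_mul, ih (by omega), expSum_gen (by omega) hk]
    push_cast; ring

lemma expSum_delta {k : ℕ} (hk : k ≤ n) : expSum (delta n k) = (k * (k - 1) / 2 : ℕ) := by
  induction k with
  | zero => simp [expSum, delta]
  | succ k ih =>
    rw [delta_succ, expSum_mul, expSum_ascProd (by omega), ih (by omega), Nat.triangle_succ]
    push_cast; ring

def IsSigmaWord (n : ℕ) (w : List (ℕ × Bool)) : Prop := ∀ p ∈ w, 1 ≤ p.1 ∧ p.1 ≤ n - 1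

@[simp] lemma evalWord_nil : evalWord n [] = 1 := rfl

@[simp] lemma evalWord_cons (p : ℕ × Bool) (w : List (ℕ × Bool)) :
    evalWord n (p :: w) = (if p.2 then gen n p.1 else (gen n p.1)⁻¹) * evalWord n w :=
  List.prod_cons

@[simp] lemma evalWord_append (u v : List (ℕ × Bool)) :
    evalWord n (u ++ v) = evalWord n u * evalWord n v := by
  simp [evalWord]

def wordInv (w : List (ℕ × Bool)) : List (ℕ × Bool) := w.reverse.map fun p => (p.1, !p.2)

lemma evalWord_wordInv (w : List (ℕ × Bool)) : evalWord n (wordInv w) = (evalWord n w)⁻¹ := by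
  induction w with
  | nil => rfl
  | cons p w ih =>
    rw [wordInv, List.reverse_cons, List.map_append, evalWord_append, ← wordInv, ih]
    obtain ⟨i, b⟩ := p
    cases b <;> simp

lemma exists_isSigmaWord_evalWord_eq (β : B n) : ∃ w, IsSigmaWord n w ∧ evalWord n w = β := by
  have hβ : β ∈ Subgroup.closure (Set.range PresentedGroup.of) := by
    rw [PresentedGroup.closure_range_of]; trivial
  induction hβ using Subgroup.closure_induction with
  | mem x hx =>
    obtain ⟨j, rfl⟩ := hx
    refine ⟨[(j + 1, true)], by simp [IsSigmaWord], ?_⟩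
    rw [evalWord_cons, evalWord_nil, mul_one, if_pos rfl]
    exact gen_eq_mk (by simp)
  | one => exact ⟨[], by simp [IsSigmaWord], rfl⟩
  | mul x y _ _ hx hy =>
    obtain ⟨u, hu, rfl⟩ := hx
    obtain ⟨v, hv, rfl⟩ := hy
    exact ⟨u ++ v, fun p hp => (List.mem_append.mp hp).elim (hu p) (hv p), evalWord_append u v⟩
  | inv x _ hx =>
    obtain ⟨u, hu, rfl⟩ := hx
    refine ⟨wordInv u, fun p hp => ?_, evalWord_wordInv u⟩
    obtain ⟨q, hq, rfl⟩ := List.mem_map.mp hp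
    exact hu q (List.mem_reverse.mp hq)

lemma exists_isSigmaWord_length_eq_normSigma (β : B n) :
    ∃ w, IsSigmaWord n w ∧ evalWord n w = β ∧ w.length = normSigma n β :=
  let ⟨w, hw, hwβ⟩ := exists_isSigmaWord_evalWord_eq β
  Nat.sInf_mem (s := {l | ∃ w, IsSigmaWord n w ∧ evalWord n w = β ∧ w.length = l})
    ⟨w.length, w, hw, hwβ, rfl⟩

lemma expSum_evalWord {w : List (ℕ × Bool)} (hw : IsSigmaWord n w) :
    expSum (evalWord n w) = w.countP (·.2) - w.countP (!·.2) := by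
  induction w with
  | nil => simp [expSum]
  | cons p w ih =>
    have hp := hw p (by simp)
    rw [evalWord_cons, expSum_mul, ih fun q hq => hw q (by simp [hq])]
    obtain ⟨i, _ | _⟩ := p <;>
      simp only [List.countP_cons, expSum_gen hp.1 hp.2, expSum_inv, ↓reduceIte, Bool.not_true,
        Bool.not_false, Bool.false_eq_true, Nat.cast_add, Nat.cast_one, Nat.cast_zero] <;> ring

lemma exists_positive_word_evalWord_eq {x : B n} (hx : x ∈ Bplus n n) :
    ∃ w, (∀ p ∈ w, 1 ≤ p.1 ∧ p.1 ≤ n - 1 ∧ p.2 = true) ∧ evalWord n w = x := by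
  induction hx using Submonoid.closure_induction with
  | mem x hx =>
    obtain ⟨i, hi, hin, rfl⟩ := hx
    exact ⟨[(i, true)], by simp; omega, by simp⟩
  | one => exact ⟨[], by simp, rfl⟩
  | mul x y _ _ hx hy =>
    obtain ⟨u, hu, rfl⟩ := hx
    obtain ⟨v, hv, rfl⟩ := hy
    exact ⟨u ++ v, fun p hp => (List.mem_append.mp hp).elim (hu p) (hv p), evalWord_append u v⟩

lemma posLen_eq_expSum {x : B n} (hx : x ∈ Bplus n n) : (posLen n x : ℤ) = expSum x := by
  obtain ⟨w₀, hw₀, hw₀x⟩ := exists_positive_word_evalWord_eq hx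
  obtain ⟨w, hw, hwx, hlen⟩ := Nat.sInf_mem
    (s := {l | ∃ w : List (ℕ × Bool), (∀ p ∈ w, 1 ≤ p.1 ∧ p.1 ≤ n - 1 ∧ p.2 = true) ∧
      evalWord n w = x ∧ w.length = l}) ⟨w₀.length, w₀, hw₀, hw₀x, rfl⟩
  have hpos : ∀ p ∈ w, p.2 = true := fun p hp => (hw p hp).2.2
  rw [posLen, ← hlen, ← hwx, expSum_evalWord fun p hp => ⟨(hw p hp).1, (hw p hp).2.1⟩,
    List.countP_eq_length.mpr hpos, List.countP_eq_zero.mpr (by simpa using hpos)]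
  simp

lemma exists_evalWord_eq_inv_delta_pow_mul {w : List (ℕ × Bool)} (hw : IsSigmaWord n w) :
    ∃ x ∈ Bplus n n, evalWord n w = (delta n n ^ w.countP (!·.2))⁻¹ * x := by
  induction w with
  | nil => exact ⟨1, one_mem _, by simp⟩
  | cons p w ih =>
    obtain ⟨x, hx, hwx⟩ := ih fun q hq => hw q (by simp [hq])
    obtain ⟨hi, hin⟩ := hw p (by simp)
    obtain ⟨i, _ | _⟩ := p
    · obtain ⟨r, hr, hrδ⟩ := exists_gen_mul_eq_delta (k := n) le_rfl hi (by omega)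
      have hinv : (gen n i)⁻¹ = r * (delta n n)⁻¹ := by rw [← hrδ]; group
      refine ⟨_, mul_mem (delta_pow_conj_mem_Bplus (w.countP (!·.2) + 1) hr) hx, ?_⟩
      simp only [evalWord_cons, List.countP_cons, hwx, hinv, Bool.false_eq_true, ↓reduceIte,
        Bool.not_false]
      group
    · refine ⟨_, mul_mem
        (delta_pow_conj_mem_Bplus (w.countP (!·.2)) (gen_mem_Bplus hi hin)) hx, ?_⟩
      simp only [evalWord_cons, List.countP_cons, hwx, ↓reduceIte, Bool.not_true,
        Bool.false_eq_true, add_zero]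
      group

/-- If `β = Δ_n^{-t} β'` is the Garside quotient decomposition of `β`,
then `t·n(n-1)/2 + ℓ(β') ≤ (n² - n - 1)·‖β‖_Σ`. -/
theorem garside_quotient_length_bound (n t : ℕ) (hn : 2 ≤ n) (β β' : B n)
    (h1 : β' ∈ Bplus n n) (h2 : β = (delta n n ^ t)⁻¹ * β')
    (h3 : t ≠ 0 → ¬ LDiv n (delta n n) β') :
    t * (n * (n - 1) / 2) + posLen n β' ≤ (n ^ 2 - n - 1) * normSigma n β := by
  obtain ⟨w, hw, hwβ, hlen⟩ := exists_isSigmaWord_length_eq_normSigma β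
  obtain ⟨x, hx, hwx⟩ := exists_evalWord_eq_inv_delta_pow_mul hw
  set p := w.countP (·.2)
  set k := w.countP (!·.2)
  set D := n * (n - 1) / 2
  have htk : t ≤ k :=
    le_of_inv_pow_mul_eq_inv_pow_mul (delta_mem_Bplus le_rfl) hx h3 (h2 ▸ hwβ ▸ hwx)
  have hpk : p + k = normSigma n β := by
    rw [← hlen, List.length_eq_countP_add_countP (·.2)]
    simp [p, k]
  have hβ' : (posLen n β' : ℤ) = p - k + t * D := by
    rw [posLen_eq_expSum h1, show β' = delta n n ^ t * β by rw [h2]; group, expSum_mul,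
      expSum_pow, expSum_delta le_rfl, ← hwβ, expSum_evalWord hw]
    ring
  have hD : 2 * D = n * (n - 1) := Nat.two_mul_div_two_of_even (Nat.even_mul_pred_self n)
  have hsq : n ^ 2 - n - 1 = 2 * D - 1 := by
    rw [hD, Nat.mul_sub_one, sq]
  have hD1 : 1 ≤ D := by
    have := Nat.mul_le_mul hn (Nat.sub_le_sub_right hn 1)
    omega
  rw [hsq, ← hpk]
  zify [hD1, show 1 ≤ 2 * D by omega]
  nlinarith

end Braid
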